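/- arXiv:1105.5796 — 4 statements merged into one kernel-verified Lean document; each statement's English description precedes it below -/
import Mathlib

section
/- Let K be a field, complete with respect to a nonarchimedean absolute value ‖·‖. Let q ≥ 1 be a natural number and let ζ ∈ K satisfy ζ^q = 1 and ‖1−ζ‖ < 1. Then the series ∑_{k≥0} C(k+q−1, k)·(1−ζ)^k converges in K and its sum equals 1. -/
theorem negBinomial_hasSum_one_at_root_of_unity_general
    {K : Type*} [NormedField K] [CompleteSpace K]
    (q : ℕ) (hq : 1 ≤ q) (ζ : K) (hζ : ζ ^ q = 1) (hζ' : ‖1 - ζ‖ < 1) :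
    HasSum (fun k : ℕ => ((k + q - 1).choose k : K) * (1 - ζ) ^ k) 1 := by
  obtain ⟨p, rfl⟩ := Nat.exists_eq_add_of_le' hq
  have h := hasSum_choose_mul_geometric_of_norm_lt_one p hζ'
  rw [sub_sub_cancel, hζ, div_one] at h
  convert h using 3 with k
  rw [← add_assoc, Nat.add_sub_cancel, Nat.choose_symm_add]

/-- Over a field `K` complete with respect to a nonarchimedean absolute value,
if `q ≥ 1`, `ζ^q = 1` and `‖1−ζ‖ < 1`, then the series
`∑_{k≥0} C(k+q−1, k) · (1−ζ)^k` converges with sum `1`. -/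
theorem negBinomial_hasSum_one_at_root_of_unity
    {K : Type*} [NormedField K] [CompleteSpace K]
    (hna : IsNonarchimedean (fun a : K => ‖a‖))
    (q : ℕ) (hq : 1 ≤ q) (ζ : K) (hζ : ζ ^ q = 1) (hζ' : ‖1 - ζ‖ < 1) :
    HasSum (fun k : ℕ => ((k + q - 1).choose k : K) * (1 - ζ) ^ k) 1 :=
  negBinomial_hasSum_one_at_root_of_unity_general q hq ζ hζ hζ'
end

section
/- Let K be a field, complete with respect to a nonarchimedean absolute value ‖·‖, let p be a prime with ‖(p:K)‖ < 1, and let q = p^s for some natural number s. Suppose the set μ = {ζ ∈ K : ζ^q = 1} of q-th roots of unity in K has exactly q elements. Then ∑_{ζ∈μ} (∑_{k≥0} C(k+q−1, k)·(1−ζ)^k) = (q : K), where each inner series converges in K. -/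
/-!
Every `p^s`-th root of unity `ζ` is close to `1`: expanding `((ζ - 1) + 1)^(p^s)`, all middle
binomial coefficients are divisible by `p`, so `‖ζ - 1‖^(p^s) ≤ ‖p‖ < 1`. The inner series is then
the negative binomial series of `(1 - (1 - ζ))^(-p^s) = ζ^(-p^s) = 1`, and summing `1` over the
`q` roots gives `q`.
-/

open Finset

lemma norm_one_sub_lt_one_of_pow_prime_pow_eq_one {K : Type*} [NormedDivisionRing K]
    [IsUltrametricDist K] {p : ℕ} (hp : p.Prime) (hpK : ‖(p : K)‖ < 1) {s : ℕ} {ζ : K}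
    (hζ : ζ ^ p ^ s = 1) : ‖1 - ζ‖ < 1 := by
  have hq : p ^ s ≠ 0 := pow_ne_zero s hp.ne_zero
  have hζ_norm : ‖ζ‖ = 1 :=
    (pow_eq_one_iff_of_nonneg (norm_nonneg ζ) hq).mp (by rw [← norm_pow, hζ, norm_one])
  have hx : ‖ζ - 1‖ ≤ 1 := by
    simpa [sub_eq_add_neg, hζ_norm] using IsUltrametricDist.norm_add_le_max ζ (-1)
  have hexp := (Commute.one_right (ζ - 1)).add_pow_prime_pow_eq' hp s
  set S := ∑ k ∈ Ioo 0 (p ^ s), (ζ - 1) ^ k * 1 ^ (p ^ s - k) * (((p ^ s).choose k / p : ℕ) : K)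
  have hS : ‖S‖ ≤ 1 :=
    IsUltrametricDist.norm_sum_le_of_forall_le_of_nonneg zero_le_one fun k _ => by
      rw [one_pow, mul_one, norm_mul, norm_pow]
      exact mul_le_one₀ (pow_le_one₀ (norm_nonneg _) hx) (norm_nonneg _)
        (IsUltrametricDist.norm_natCast_le_one K _)
  rw [sub_add_cancel, hζ, one_pow, add_right_comm, eq_comm, add_eq_right,
    add_eq_zero_iff_eq_neg] at hexp
  have hpow : ‖ζ - 1‖ ^ p ^ s < 1 := by
    rw [← norm_pow, hexp, norm_neg, norm_mul]
    exact (mul_le_of_le_one_right (norm_nonneg _) hS).trans_lt hpK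
  rw [norm_sub_rev]
  exact (pow_lt_one_iff_of_nonneg (norm_nonneg _) hq).mp hpow

lemma hasSum_choose_add_sub_one_mul_geometric {K : Type*} [NormedDivisionRing K] {m : ℕ}
    (hm : m ≠ 0) {r : K} (hr : ‖r‖ < 1) :
    HasSum (fun k : ℕ => ((k + m - 1).choose k : K) * r ^ k) ((1 - r) ^ m)⁻¹ := by
  obtain ⟨n, rfl⟩ := Nat.exists_eq_add_one_of_ne_zero hm
  simpa [Nat.choose_symm_add] using hasSum_choose_mul_geometric_of_norm_lt_one n hr

theorem sum_negBinomial_over_roots_of_unity_general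
    {K : Type*} [NormedField K]
    (hna : IsNonarchimedean (fun a : K => ‖a‖))
    (p : ℕ) (hp : p.Prime) (hpK : ‖(p : K)‖ < 1) (s : ℕ) (q : ℕ) (hq : q = p ^ s)
    (μ : Finset K) (hμ : ∀ ζ : K, ζ ∈ μ ↔ ζ ^ q = 1) (hcard : μ.card = q) :
    (∀ ζ ∈ μ, Summable (fun k : ℕ => ((k + q - 1).choose k : K) * (1 - ζ) ^ k)) ∧
      ∑ ζ ∈ μ, (∑' k : ℕ, ((k + q - 1).choose k : K) * (1 - ζ) ^ k) = (q : K) := by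
  have : IsUltrametricDist K := .isUltrametricDist_of_isNonarchimedean_norm hna
  subst hq
  have hsum (ζ : K) (hζ : ζ ∈ μ) :
      HasSum (fun k : ℕ => ((k + p ^ s - 1).choose k : K) * (1 - ζ) ^ k) 1 := by
    have hζq := (hμ ζ).mp hζ
    simpa [hζq] using hasSum_choose_add_sub_one_mul_geometric (pow_ne_zero s hp.ne_zero)
      (norm_one_sub_lt_one_of_pow_prime_pow_eq_one hp hpK hζq)
  refine ⟨fun ζ hζ => (hsum ζ hζ).summable, ?_⟩
  rw [sum_congr rfl fun ζ hζ => (hsum ζ hζ).tsum_eq, sum_const, hcard, nsmul_one]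

/-- Over a field `K` complete with respect to a nonarchimedean absolute value with
residue characteristic `p` (i.e. `‖p‖ < 1`), if the set of `q`-th roots of unity
(`q = p^s`) has exactly `q` elements, then each series
`∑_{k≥0} C(k+q−1, k)·(1−ζ)^k` (for `ζ` a `q`-th root of unity) converges, and the
sum over all `q`-th roots of unity of these sums equals `q`. -/
theorem sum_negBinomial_over_roots_of_unity
    {K : Type*} [NormedField K] [CompleteSpace K]
    (hna : IsNonarchimedean (fun a : K => ‖a‖))
    (p : ℕ) (hp : p.Prime) (hpK : ‖(p : K)‖ < 1) (s : ℕ) (q : ℕ) (hq : q = p ^ s)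
    (μ : Finset K) (hμ : ∀ ζ : K, ζ ∈ μ ↔ ζ ^ q = 1) (hcard : μ.card = q) :
    (∀ ζ ∈ μ, Summable (fun k : ℕ => ((k + q - 1).choose k : K) * (1 - ζ) ^ k)) ∧
      ∑ ζ ∈ μ, (∑' k : ℕ, ((k + q - 1).choose k : K) * (1 - ζ) ^ k) = (q : K) :=
  sum_negBinomial_over_roots_of_unity_general hna p hp hpK s q hq μ hμ hcard
end

section
/- Let p be a prime, m and n natural numbers, and k = (k₁,…,kₙ) an n-tuple of natural numbers; write |k| = k₁ + ⋯ + kₙ. Then, as real numbers, |k|/(p^m(p−1)) − n·log_p(|k|+1) − n·p/(p−1) ≤ ∑_{i=1}^{n} v_p(⌊kᵢ/p^m⌋!) ≤ |k|/(p^m(p−1)), where v_p denotes the p-adic valuation and ⌊·⌋ is the floor of the natural-number division. -/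
lemma single_est (p : ℕ) (hp : p.Prime) (m k : ℕ) :
    (k : ℝ) / ((p : ℝ) ^ m * (p - 1)) - Real.logb p ((k : ℝ) + 1) - p / (p - 1) ≤
      (padicValNat p (k / p ^ m).factorial : ℝ) ∧
    (padicValNat p (k / p ^ m).factorial : ℝ) ≤ (k : ℝ) / ((p : ℝ) ^ m * (p - 1)) := by
  haveI : Fact p.Prime := ⟨hp⟩
  have hp1 : (1 : ℝ) < p := by exact_mod_cast hp.one_lt
  have hpm : (0 : ℝ) < (p : ℝ) ^ m := by positivity
  have hpmN : 0 < p ^ m := pow_pos hp.pos m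
  have hp1' : (0 : ℝ) < (p : ℝ) - 1 := by linarith
  set q := k / p ^ m with hq
  set v : ℝ := (padicValNat p q.factorial : ℝ) with hv
  have hvnn : 0 ≤ v := Nat.cast_nonneg _
  have hcast : ((p - 1 : ℕ) : ℝ) = (p : ℝ) - 1 := by
    rw [Nat.cast_sub hp.one_lt.le]; simp
  have hs_le : (p.digits q).sum ≤ q := Nat.digit_sum_le p q
  have legendreR : ((p : ℝ) - 1) * v = (q : ℝ) - ((p.digits q).sum : ℝ) := by
    rw [hv, ← hcast, ← Nat.cast_mul, sub_one_mul_padicValNat_factorial q,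
      Nat.cast_sub hs_le]
  have hqk : (q : ℝ) * (p : ℝ) ^ m ≤ (k : ℝ) := by
    exact_mod_cast Nat.div_mul_le_self k (p ^ m)
  have hkq : (k : ℝ) < ((q : ℝ) + 1) * (p : ℝ) ^ m := by
    have : k < (q + 1) * p ^ m := (Nat.div_lt_iff_lt_mul hpmN).mp (Nat.lt_succ_self q)
    exact_mod_cast this
  have hsumR : ((p.digits q).sum : ℝ) ≤ ((p : ℝ) - 1) * ((Nat.log p q : ℝ) + 1) := by
    rcases eq_or_ne q 0 with h0 | h0
    · rw [h0]
      simp only [Nat.digits_zero, List.sum_nil, Nat.cast_zero, Nat.log_zero_right]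
      nlinarith
    · have hsum : (p.digits q).sum ≤ (p.digits q).length * (p - 1) := by
        apply List.sum_le_card_nsmul
        intro x hx
        exact Nat.le_sub_one_of_lt (Nat.digits_lt_base hp.one_lt hx)
      have hlen : (p.digits q).length = Nat.log p q + 1 := Nat.digits_len p q hp.one_lt h0
      calc ((p.digits q).sum : ℝ) ≤ ((p.digits q).length * (p - 1) : ℕ) := by exact_mod_cast hsum
        _ = ((p : ℝ) - 1) * ((Nat.log p q : ℝ) + 1) := by
            rw [Nat.cast_mul, hcast, hlen]; push_cast; ring
  have hlog : (Nat.log p q : ℝ) ≤ Real.logb p ((k : ℝ) + 1) := by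
    calc (Nat.log p q : ℝ) ≤ (Nat.log p (k + 1) : ℝ) := by
          exact_mod_cast Nat.log_mono_right ((Nat.div_le_self k _).trans (Nat.le_succ k))
      _ ≤ Real.logb p ((k + 1 : ℕ) : ℝ) := Real.natLog_le_logb (k + 1) p
      _ = Real.logb p ((k : ℝ) + 1) := by push_cast; rfl
  have hlognn : 0 ≤ Real.logb p ((k : ℝ) + 1) :=
    Real.logb_nonneg hp1 (by push_cast; linarith [Nat.cast_nonneg (α := ℝ) k])
  constructor
  · have key : (k : ℝ) / (p : ℝ) ^ m - 1 - ((p : ℝ) - 1) * (Real.logb p ((k : ℝ) + 1) + 1)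
        ≤ ((p : ℝ) - 1) * v := by
      rw [legendreR]
      have h1 : (k : ℝ) / (p : ℝ) ^ m - 1 ≤ (q : ℝ) := by
        rw [sub_le_iff_le_add, div_le_iff₀ hpm]
        nlinarith [hkq]
      nlinarith [hsumR, hlog]
    have hdiv : (k : ℝ) / ((p : ℝ) ^ m * ((p : ℝ) - 1)) - Real.logb p ((k : ℝ) + 1)
        - (p : ℝ) / ((p : ℝ) - 1)
        = ((k : ℝ) / (p : ℝ) ^ m - 1 - ((p : ℝ) - 1) * (Real.logb p ((k : ℝ) + 1) + 1))
          / ((p : ℝ) - 1) := by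
      field_simp
      ring
    rw [hdiv, div_le_iff₀ hp1']
    linarith [key]
  · have key : ((p : ℝ) - 1) * v ≤ (k : ℝ) / (p : ℝ) ^ m := by
      rw [legendreR]
      have : (q : ℝ) ≤ (k : ℝ) / (p : ℝ) ^ m := by rw [le_div_iff₀ hpm]; exact hqk
      have : (0 : ℝ) ≤ ((p.digits q).sum : ℝ) := Nat.cast_nonneg _
      linarith
    rw [le_div_iff₀ hpm] at key
    rw [le_div_iff₀ (by positivity)]
    nlinarith [key]

/-- Estimate for the `p`-adic valuation of factorials of the quotients `⌊kᵢ/p^m⌋`: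
`|k|/(p^m(p−1)) − n·log_p(|k|+1) − n·p/(p−1) ≤ ∑ᵢ v_p(⌊kᵢ/p^m⌋!) ≤ |k|/(p^m(p−1))`. -/
theorem padicValNat_factorial_div_pow_multiindex_estimate
    (p : ℕ) (hp : p.Prime) (m n : ℕ) (k : Fin n → ℕ) :
    ((∑ i, k i : ℕ) : ℝ) / ((p : ℝ) ^ m * (p - 1)) -
          n * Real.logb p ((∑ i, k i : ℕ) + 1) - n * p / (p - 1) ≤
        ∑ i, (padicValNat p (k i / p ^ m).factorial : ℝ) ∧
      ∑ i, (padicValNat p (k i / p ^ m).factorial : ℝ) ≤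
        ((∑ i, k i : ℕ) : ℝ) / ((p : ℝ) ^ m * (p - 1)) := by
  have hp1 : (1 : ℝ) < p := by exact_mod_cast hp.one_lt
  have hpm : (0 : ℝ) < (p : ℝ) ^ m := by positivity
  have hp1' : (0 : ℝ) < (p : ℝ) - 1 := by linarith
  have hsum : ∀ i, (k i : ℝ) ≤ ((∑ j, k j : ℕ) : ℝ) := by
    intro i
    exact_mod_cast Finset.single_le_sum (f := k) (fun j _ => Nat.zero_le _) (Finset.mem_univ i)
  constructor
  · calc ((∑ i, k i : ℕ) : ℝ) / ((p : ℝ) ^ m * (p - 1)) -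
          n * Real.logb p ((∑ i, k i : ℕ) + 1) - n * p / (p - 1)
        = ∑ i, ((k i : ℝ) / ((p : ℝ) ^ m * (p - 1)) -
            Real.logb p ((∑ j, k j : ℕ) + 1) - p / (p - 1)) := by
          rw [Finset.sum_sub_distrib, Finset.sum_sub_distrib, Finset.sum_const,
            Finset.sum_const, ← Finset.sum_div, Finset.card_univ, Fintype.card_fin]
          push_cast
          ring
      _ ≤ ∑ i, (padicValNat p (k i / p ^ m).factorial : ℝ) := by
          apply Finset.sum_le_sum
          intro i _
          have h := (single_est p hp m (k i)).1
          have hmono : Real.logb p ((k i : ℝ) + 1) ≤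
              Real.logb p (((∑ j, k j : ℕ) : ℝ) + 1) := by
            apply Real.logb_le_logb_of_le hp1 (by positivity)
            linarith [hsum i]
          linarith
  · calc ∑ i, (padicValNat p (k i / p ^ m).factorial : ℝ)
        ≤ ∑ i, (k i : ℝ) / ((p : ℝ) ^ m * (p - 1)) :=
          Finset.sum_le_sum fun i _ => (single_est p hp m (k i)).2
      _ = ((∑ i, k i : ℕ) : ℝ) / ((p : ℝ) ^ m * (p - 1)) := by
          rw [← Finset.sum_div]; push_cast; ring
end

section
/- Let p be a prime and m, l natural numbers. Then, as real numbers, ⌈l/p^{m+1}⌉ − l/(p−1) + v_p(l!) − v_p(⌊l/p^{m+2}⌋!) ≥ ((p²−p−1)·l)/(p^{m+2}(p−1)) − log_p(l+1) − 1. -/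
/-!
By Legendre's formula `(p - 1) v_p(l!) = l - s_p(l)`, the term `v_p(l!) - l/(p-1)` equals
`-s_p(l)/(p-1)`, and the digit sum `s_p(l)` is at most `(p-1)` times the number of digits,
which is at most `log_p(l+1) + 1`. The same formula gives `v_p(q!) ≤ q/(p-1)` for
`q = ⌊l/p^(m+2)⌋`, and `ν_m(l) ≥ l/p^(m+1)`; the claim then follows from
`(p² - p - 1)/(p^(m+2)(p-1)) = 1/p^(m+1) - 1/(p^(m+2)(p-1))`.
-/

/-- `ν_m(k) = ⌈k / p^(m+1)⌉`, as in the appendix of the paper. -/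
def nuCeil (p m k : ℕ) : ℕ := ⌈(k : ℚ) / (p : ℚ) ^ (m + 1)⌉₊

open Nat

theorem Nat.digits_sum_le_sub_one_mul_log_add_one {p : ℕ} (hp : 1 < p) (n : ℕ) :
    (p.digits n).sum ≤ (p - 1) * (Nat.log p n + 1) := by
  rcases eq_or_ne n 0 with rfl | hn
  · simp
  calc (p.digits n).sum ≤ (p.digits n).length * (p - 1) :=
        List.sum_le_card_nsmul _ _ fun d hd => Nat.le_sub_one_of_lt (Nat.digits_lt_base hp hd)
    _ = (p - 1) * (Nat.log p n + 1) := by rw [Nat.length_digits p n hp hn, Nat.mul_comm]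

theorem Nat.Prime.cast_sub_one_pos {p : ℕ} (hp : p.Prime) : (0 : ℝ) < p - 1 :=
  sub_pos.2 (by exact_mod_cast hp.one_lt)

section Legendre

variable {p : ℕ} [hp : Fact p.Prime]

theorem cast_padicValNat_factorial (n : ℕ) :
    (padicValNat p n ! : ℝ) = (n - (p.digits n).sum) / (p - 1) := by
  rw [eq_div_iff hp.out.cast_sub_one_pos.ne', mul_comm]
  have h := sub_one_mul_padicValNat_factorial (p := p) n
  rw [← Nat.cast_inj (R := ℝ), Nat.cast_mul, Nat.cast_sub hp.out.one_le,
    Nat.cast_sub (Nat.digit_sum_le p n)] at h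
  simpa using h

theorem cast_padicValNat_factorial_le (n : ℕ) : (padicValNat p n ! : ℝ) ≤ n / (p - 1) := by
  rw [cast_padicValNat_factorial]
  exact div_le_div_of_nonneg_right (sub_le_self _ (Nat.cast_nonneg _)) hp.out.cast_sub_one_pos.le

theorem div_sub_one_sub_padicValNat_factorial_le (n : ℕ) :
    n / (p - 1) - (padicValNat p n ! : ℝ) ≤ Real.logb p (n + 1) + 1 := by
  have hp1 := hp.out.cast_sub_one_pos
  have hdigits : ((p.digits n).sum : ℝ) ≤ ((p - 1 : ℕ) : ℝ) * (Nat.log p n + 1) := by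
    exact_mod_cast Nat.digits_sum_le_sub_one_mul_log_add_one hp.out.one_lt n
  rw [Nat.cast_sub hp.out.one_le, Nat.cast_one] at hdigits
  have hlog : (Nat.log p n : ℝ) ≤ Real.logb p (n + 1) :=
    calc (Nat.log p n : ℝ) ≤ Nat.log p (n + 1) := by
          exact_mod_cast Nat.log_mono_right n.le_succ
      _ ≤ Real.logb p (n + 1) := by exact_mod_cast Real.natLog_le_logb (n + 1) p
  rw [cast_padicValNat_factorial, ← sub_div, sub_sub_cancel, div_le_iff₀ hp1]
  nlinarith

theorem cast_padicValNat_factorial_div_pow_le (n k : ℕ) :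
    (padicValNat p (n / p ^ k)! : ℝ) ≤ n / (p ^ k * (p - 1)) := by
  have hp1 := hp.out.cast_sub_one_pos
  calc (padicValNat p (n / p ^ k)! : ℝ) ≤ ((n / p ^ k : ℕ) : ℝ) / (p - 1) :=
        cast_padicValNat_factorial_le _
    _ ≤ (n / p ^ k : ℝ) / (p - 1) := by
        gcongr
        exact_mod_cast Nat.cast_div_le
    _ = n / (p ^ k * (p - 1)) := by rw [div_div]

end Legendre

theorem div_pow_le_nuCeil (p m k : ℕ) : (k : ℝ) / p ^ (m + 1) ≤ nuCeil p m k := by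
  have h := (Rat.cast_le (K := ℝ)).2 (Nat.le_ceil ((k : ℚ) / (p : ℚ) ^ (m + 1)))
  push_cast at h
  exact h

/-- Estimate for the valuation of the remainder coefficients
`p^{ν_m(l)}·π^{−l}·l!/(q_l^{(m+2)})!` in the division lemma:
`⌈l/p^{m+1}⌉ − l/(p−1) + v_p(l!) − v_p(⌊l/p^{m+2}⌋!) ≥
  ((p²−p−1)·l)/(p^{m+2}(p−1)) − log_p(l+1) − 1`. -/
theorem remainder_coefficient_valuation_estimate
    (p : ℕ) (hp : p.Prime) (m l : ℕ) :
    ((p : ℝ) ^ 2 - p - 1) * l / ((p : ℝ) ^ (m + 2) * (p - 1)) - Real.logb p (l + 1) - 1 ≤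
      (nuCeil p m l : ℝ) - l / (p - 1) + (padicValNat p l.factorial : ℝ) -
        (padicValNat p (l / p ^ (m + 2)).factorial : ℝ) := by
  have : Fact p.Prime := ⟨hp⟩
  have hsplit : ((p : ℝ) ^ 2 - p - 1) * l / ((p : ℝ) ^ (m + 2) * (p - 1)) =
      l / (p : ℝ) ^ (m + 1) - l / ((p : ℝ) ^ (m + 2) * (p - 1)) := by
    have := hp.cast_sub_one_pos.ne'
    have : (p : ℝ) ≠ 0 := by exact_mod_cast hp.ne_zero
    field_simp
    ring
  rw [hsplit]
  linarith [div_pow_le_nuCeil p m l, div_sub_one_sub_padicValNat_factorial_le (p := p) l,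
    cast_padicValNat_factorial_div_pow_le (p := p) l (m + 2)]
end
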